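/- (Lemma 3.3 of the paper.) Let γ be an oriented simple lattice cycle and let v ∈ ℤ². Then topw(γ,v) − metricw(γ,v) = angle(γ,v) if v is a vertex of γ, and topw(γ,v) − metricw(γ,v) = 0 otherwise. -/

import Mathlib

open scoped Classical

/-- An oriented simple lattice cycle in the grid graph on `ℤ²`: a cyclic sequence
`v 0, v 1, …, v (n-1), v n = v 0` (encoded as an `n`-periodic function `ℕ → ℤ × ℤ`),
with `n ≥ 4`, vertices pairwise distinct within one period, and consecutive
vertices at Euclidean distance `1`. -/
structure LatticeCycle where
  n : ℕ
  four_le : 4 ≤ n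
  v : ℕ → ℤ × ℤ
  periodic : ∀ i, v (i + n) = v i
  inj : ∀ i j, i < n → j < n → v i = v j → i = j
  step : ∀ i, v (i + 1) - v i = (1, 0) ∨ v (i + 1) - v i = (-1, 0) ∨
    v (i + 1) - v i = (0, 1) ∨ v (i + 1) - v i = (0, -1)

/-- Inclusion of `ℤ²` into `ℝ²`. -/
def toR (v : ℤ × ℤ) : ℝ × ℝ := ((v.1 : ℝ), (v.2 : ℝ))

/-- The image of a lattice cycle: the union of the closed segments `[vᵢ, vᵢ₊₁] ⊆ ℝ²`. -/
def LatticeCycle.image (γ : LatticeCycle) : Set (ℝ × ℝ) :=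
  ⋃ i ∈ Finset.range γ.n, segment ℝ (toR (γ.v i)) (toR (γ.v (i + 1)))

/-- Signed crossing of the directed edge `u → w` with the rightward horizontal ray
from `p`: an edge from `(a,b)` to `(a,b+1)` contributes `+1`, and an edge from
`(a,b+1)` to `(a,b)` contributes `-1`, whenever `a > p₁` and `b ≤ p₂ < b + 1`. -/
noncomputable def vcross (u w : ℤ × ℤ) (p : ℝ × ℝ) : ℤ :=
  if w = (u.1, u.2 + 1) ∧ p.1 < (u.1 : ℝ) ∧ (u.2 : ℝ) ≤ p.2 ∧ p.2 < (u.2 : ℝ) + 1 then 1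
  else if u = (w.1, w.2 + 1) ∧ p.1 < (w.1 : ℝ) ∧ (w.2 : ℝ) ≤ p.2 ∧ p.2 < (w.2 : ℝ) + 1 then -1
  else 0

/-- The winding number of `γ` around `p`: the signed number of directed vertical
edges of `γ` crossing the rightward horizontal ray from `p`. -/
noncomputable def wind (γ : LatticeCycle) (p : ℝ × ℝ) : ℤ :=
  ∑ i ∈ Finset.range γ.n, vcross (γ.v i) (γ.v (i + 1)) p

/-- `γ` is counterclockwise oriented: `wind(γ,p) ∈ {0,1}` for every `p` off the image. -/
def LatticeCycle.ccw (γ : LatticeCycle) : Prop :=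
  ∀ p : ℝ × ℝ, p ∉ γ.image → wind γ p = 0 ∨ wind γ p = 1

/-- `γ` is clockwise oriented: `wind(γ,p) ∈ {-1,0}` for every `p` off the image. -/
def LatticeCycle.cw (γ : LatticeCycle) : Prop :=
  ∀ p : ℝ × ℝ, p ∉ γ.image → wind γ p = -1 ∨ wind γ p = 0

/-- The point `v + (k/2, l/2)`; for `k, l ∈ {-1, 1}` these are the four points of `N_v`. -/
noncomputable def corner (v : ℤ × ℤ) (k l : ℤ) : ℝ × ℝ :=
  ((v.1 : ℝ) + (k : ℝ) / 2, (v.2 : ℝ) + (l : ℝ) / 2)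

/-- The metric weight of `v` with respect to `γ`:
`(1/4) · Σ_{u ∈ N_v} wind(γ,u)`. -/
noncomputable def metricw (γ : LatticeCycle) (v : ℤ × ℤ) : ℚ :=
  ((wind γ (corner v (-1) (-1)) + wind γ (corner v (-1) 1) +
    wind γ (corner v 1 (-1)) + wind γ (corner v 1 1) : ℤ) : ℚ) / 4

/-- The set of values `{wind(γ,u) : u ∈ N_v}` (each distinct value counted once). -/
noncomputable def windSet (γ : LatticeCycle) (v : ℤ × ℤ) : Finset ℤ :=
  {wind γ (corner v (-1) (-1)), wind γ (corner v (-1) 1),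
   wind γ (corner v 1 (-1)), wind γ (corner v 1 1)}

/-- The topological weight of `v` with respect to `γ`: the arithmetic mean of the
set of values `{wind(γ,u) : u ∈ N_v}`, each distinct value counted once. -/
noncomputable def topw (γ : LatticeCycle) (v : ℤ × ℤ) : ℚ :=
  (∑ k ∈ windSet γ v, (k : ℚ)) / ((windSet γ v).card : ℚ)

/-- The angle of `γ` at the vertex of index `i`: with `d_in = vᵢ - vᵢ₋₁` and
`d_out = vᵢ₊₁ - vᵢ`, it is `0` if `d_out = d_in`, `1/4` if `d_out` is `d_in`
rotated by 90° counterclockwise, `-1/4` if rotated by 90° clockwise. -/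
noncomputable def angleAt (γ : LatticeCycle) (i : ℕ) : ℚ :=
  let din := γ.v (i + γ.n) - γ.v (i + γ.n - 1)
  let dout := γ.v (i + 1) - γ.v i
  if dout = din then 0
  else if dout = (-din.2, din.1) then 1/4
  else if dout = (din.2, -din.1) then -1/4
  else 0

/-- `v` is a vertex of `γ`. -/
def LatticeCycle.isVertex (γ : LatticeCycle) (v : ℤ × ℤ) : Prop :=
  ∃ i, i < γ.n ∧ γ.v i = v

/-- The angle of `γ` at a point `v ∈ ℤ²`: the angle at the (unique) index of `v`
if `v` is a vertex of `γ`, and `0` otherwise. -/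
noncomputable def angle (γ : LatticeCycle) (v : ℤ × ℤ) : ℚ :=
  if h : γ.isVertex v then angleAt γ h.choose else 0

/-- The color of a lattice point: `1` if `x + y` is odd, `-1` if `x + y` is even. -/
def col (v : ℤ × ℤ) : ℤ := if Even (v.1 + v.2) then -1 else 1

/-- The enclosed charge `charge_int(γ) = Σ_{v ∈ ℤ², v ∉ image γ} col(v)·wind(γ,v)`. -/
noncomputable def chargeInt (γ : LatticeCycle) : ℤ :=
  ∑ᶠ v : ℤ × ℤ, if toR v ∉ γ.image then col v * wind γ (toR v) else 0

/-- The boundary charge `charge_∂(γ) = Σ_{v vertex of γ} angle(γ,v)·col(v)`. -/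
noncomputable def chargeBd (γ : LatticeCycle) : ℚ :=
  ∑ i ∈ Finset.range γ.n, angle γ (γ.v i) * (col (γ.v i) : ℚ)

/-!
Crossing one of the four unit edges at `v` changes the winding number by the signed number of
times `γ` traverses that edge. If `v` is not on `γ`, no such edge is traversed and the four
winding numbers around `v` agree. If `v = vᵢ`, only the edges to `vᵢ₋₁` and `vᵢ₊₁` are
traversed, so the four values lie in `{w, w + 1}`, `topw` is their midpoint, and
`topw - metricw = (2 - s) / 4` where `s` counts the corners with value `w + 1`: `s = 1, 2, 3`
at a left turn, a straight step and a right turn.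
-/

def IsUnitStep (d : ℤ × ℤ) : Prop :=
  d = (1, 0) ∨ d = (-1, 0) ∨ d = (0, 1) ∨ d = (0, -1)

def edgeSign (u w a b : ℤ × ℤ) : ℤ :=
  (if u = a ∧ w = b then 1 else 0) - (if u = b ∧ w = a then 1 else 0)

noncomputable def squareCenter (z : ℤ × ℤ) : ℝ × ℝ := ((z.1 : ℝ) + 1 / 2, (z.2 : ℝ) + 1 / 2)

def LatticeCycle.flow (γ : LatticeCycle) (a b : ℤ × ℤ) : ℤ :=
  ∑ j ∈ Finset.range γ.n, edgeSign (γ.v j) (γ.v (j + 1)) a b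

lemma intCast_add_half_lt_intCast_iff {a b : ℤ} : (a : ℝ) + 1 / 2 < b ↔ a < b := by
  constructor
  · intro h
    by_contra! hba
    have : (b : ℝ) ≤ a := by exact_mod_cast hba
    linarith
  · intro h
    have : (a : ℝ) + 1 ≤ b := by exact_mod_cast h
    linarith

lemma intCast_le_add_half_and_lt_iff {a b : ℤ} :
    ((a : ℝ) ≤ b + 1 / 2 ∧ (b : ℝ) + 1 / 2 < a + 1) ↔ a = b := by
  constructor
  · rintro ⟨h₁, h₂⟩
    have : a < b + 1 := by exact_mod_cast (by linarith : (a : ℝ) < b + 1)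
    have : b < a + 1 := by exact_mod_cast (by linarith : (b : ℝ) < a + 1)
    omega
  · rintro rfl
    constructor <;> linarith

lemma vcross_squareCenter (u w z : ℤ × ℤ) :
    vcross u w (squareCenter z) =
      if w = (u.1, u.2 + 1) ∧ z.1 < u.1 ∧ u.2 = z.2 then 1
      else if u = (w.1, w.2 + 1) ∧ z.1 < w.1 ∧ w.2 = z.2 then -1
      else 0 := by
  simp only [vcross, squareCenter, intCast_add_half_lt_intCast_iff,
    intCast_le_add_half_and_lt_iff]

lemma vcross_squareCenter_sub_right (u w z : ℤ × ℤ) :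
    vcross u w (squareCenter z) - vcross u w (squareCenter (z + (1, 0))) =
      edgeSign u w (z + (1, 0)) (z + (1, 1)) := by
  obtain ⟨u₁, u₂⟩ := u; obtain ⟨w₁, w₂⟩ := w; obtain ⟨z₁, z₂⟩ := z
  simp only [vcross_squareCenter, edgeSign, Prod.mk_add_mk, Prod.mk.injEq]
  split_ifs <;> omega

/-- The first difference telescopes along the cycle; what is left is the crossing of the
horizontal edge that separates the two squares. -/
lemma vcross_squareCenter_sub_up (u w z : ℤ × ℤ) (h : IsUnitStep (w - u)) :
    vcross u w (squareCenter z) - vcross u w (squareCenter (z + (0, 1))) =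
      ((if w.2 = z.2 + 1 ∧ z.1 < w.1 then 1 else 0) -
        (if u.2 = z.2 + 1 ∧ z.1 < u.1 then 1 else 0)) -
      edgeSign u w (z + (0, 1)) (z + (1, 1)) := by
  obtain ⟨u₁, u₂⟩ := u; obtain ⟨w₁, w₂⟩ := w; obtain ⟨z₁, z₂⟩ := z
  simp only [IsUnitStep, Prod.mk_sub_mk, Prod.mk.injEq] at h
  simp only [vcross_squareCenter, edgeSign, Prod.mk_add_mk, Prod.mk.injEq]
  rcases h with ⟨h₁, h₂⟩ | ⟨h₁, h₂⟩ | ⟨h₁, h₂⟩ | ⟨h₁, h₂⟩ <;> split_ifs <;> omega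

namespace LatticeCycle

variable (γ : LatticeCycle)

lemma n_pos : 0 < γ.n := by have := γ.four_le; omega

lemma v_n_eq_v_zero : γ.v γ.n = γ.v 0 := by simpa using γ.periodic 0

lemma v_eq_v_iff {j k : ℕ} : γ.v j = γ.v k ↔ j ≡ k [MOD γ.n] := by
  have hp : Function.Periodic γ.v γ.n := γ.periodic
  rw [← hp.map_mod_nat j, ← hp.map_mod_nat k]
  exact ⟨γ.inj _ _ (Nat.mod_lt _ γ.n_pos) (Nat.mod_lt _ γ.n_pos), congrArg γ.v⟩

lemma v_succ_eq_v_succ_iff {j k : ℕ} : γ.v (j + 1) = γ.v (k + 1) ↔ γ.v j = γ.v k := by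
  simp only [v_eq_v_iff]
  exact ⟨Nat.ModEq.add_right_cancel' 1, Nat.ModEq.add_right 1⟩

lemma isVertex_v (j : ℕ) : γ.isVertex (γ.v j) :=
  ⟨j % γ.n, Nat.mod_lt _ γ.n_pos, Function.Periodic.map_mod_nat γ.periodic j⟩

lemma filter_v_eq_v (k : ℕ) : {j ∈ Finset.range γ.n | γ.v j = γ.v k} = {k % γ.n} := by
  ext j
  simp only [Finset.mem_filter, Finset.mem_range, Finset.mem_singleton, v_eq_v_iff]
  constructor
  · rintro ⟨hj, h⟩
    exact (Nat.mod_eq_of_lt hj).symm.trans h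
  · rintro rfl
    exact ⟨Nat.mod_lt _ γ.n_pos, Nat.mod_modEq k γ.n⟩

lemma sum_range_ite_v_eq_and (k : ℕ) (Q : Prop) [Decidable Q] :
    ∑ j ∈ Finset.range γ.n, (if γ.v j = γ.v k ∧ Q then 1 else 0 : ℤ) = if Q then 1 else 0 := by
  by_cases hQ : Q <;> simp [hQ, Finset.sum_boole, filter_v_eq_v]

lemma isUnitStep_v_sub_v_pred (i : ℕ) : IsUnitStep (γ.v (i + γ.n) - γ.v (i + γ.n - 1)) := by
  have := γ.step (i + γ.n - 1)
  rwa [Nat.sub_add_cancel (by have := γ.n_pos; omega)] at this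

lemma wind_squareCenter_sub_right (z : ℤ × ℤ) :
    wind γ (squareCenter z) - wind γ (squareCenter (z + (1, 0))) =
      γ.flow (z + (1, 0)) (z + (1, 1)) := by
  simp only [wind, flow, ← Finset.sum_sub_distrib, vcross_squareCenter_sub_right]

lemma wind_squareCenter_sub_up (z : ℤ × ℤ) :
    wind γ (squareCenter z) - wind γ (squareCenter (z + (0, 1))) =
      -γ.flow (z + (0, 1)) (z + (1, 1)) := by
  rw [wind, wind, flow, ← Finset.sum_sub_distrib,
    Finset.sum_congr rfl fun j _ => vcross_squareCenter_sub_up _ _ z (γ.step j),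
    Finset.sum_sub_distrib, Finset.sum_range_sub
      (fun j => if (γ.v j).2 = z.2 + 1 ∧ z.1 < (γ.v j).1 then (1 : ℤ) else 0), v_n_eq_v_zero,
    sub_self, zero_sub]

lemma flow_swap (a b : ℤ × ℤ) : γ.flow b a = -γ.flow a b := by
  simp only [flow, edgeSign, ← Finset.sum_neg_distrib, neg_sub]

lemma wind_corner_sub_wind_corner (v : ℤ × ℤ) :
    wind γ (corner v (-1) 1) - wind γ (corner v 1 1) = γ.flow v (v + (0, 1)) ∧
    wind γ (corner v (-1) (-1)) - wind γ (corner v 1 (-1)) = -γ.flow v (v + (0, -1)) ∧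
    wind γ (corner v (-1) (-1)) - wind γ (corner v (-1) 1) = γ.flow v (v + (-1, 0)) ∧
    wind γ (corner v 1 (-1)) - wind γ (corner v 1 1) = -γ.flow v (v + (1, 0)) := by
  obtain ⟨x, y⟩ := v
  obtain ⟨hSW, hNW, hSE, hNE⟩ : corner (x, y) (-1) (-1) = squareCenter (x - 1, y - 1) ∧
      corner (x, y) (-1) 1 = squareCenter (x - 1, y) ∧
      corner (x, y) 1 (-1) = squareCenter (x, y - 1) ∧
      corner (x, y) 1 1 = squareCenter (x, y) := by
    refine ⟨?_, ?_, ?_, ?_⟩ <;> simp only [corner, squareCenter, Prod.mk.injEq] <;> push_cast <;>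
      constructor <;> ring
  rw [hSW, hNW, hSE, hNE]
  refine ⟨?_, ?_, ?_, ?_⟩
  · simpa using γ.wind_squareCenter_sub_right (x - 1, y)
  · simpa [γ.flow_swap (x, y), ← sub_eq_add_neg] using γ.wind_squareCenter_sub_right (x - 1, y - 1)
  · simpa [γ.flow_swap (x, y), ← sub_eq_add_neg] using γ.wind_squareCenter_sub_up (x - 1, y - 1)
  · simpa using γ.wind_squareCenter_sub_up (x, y - 1)

lemma flow_eq_zero_of_not_isVertex {a : ℤ × ℤ} (h : ¬γ.isVertex a) (b : ℤ × ℤ) :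
    γ.flow a b = 0 := by
  refine Finset.sum_eq_zero fun j _ => ?_
  have h₀ : γ.v j ≠ a := fun e => h (e ▸ γ.isVertex_v j)
  have h₁ : γ.v (j + 1) ≠ a := fun e => h (e ▸ γ.isVertex_v (j + 1))
  simp [edgeSign, h₀, h₁]

lemma flow_v_add (i : ℕ) (e : ℤ × ℤ) :
    γ.flow (γ.v i) (γ.v i + e) =
      (if γ.v (i + 1) - γ.v i = e then 1 else 0) -
        (if γ.v (i + γ.n) - γ.v (i + γ.n - 1) = -e then 1 else 0) := by
  have hprev : γ.v (i + γ.n - 1 + 1) = γ.v i := by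
    rw [Nat.sub_add_cancel (by have := γ.n_pos; omega), γ.periodic]
  have hout (j : ℕ) : (γ.v j = γ.v i ∧ γ.v (j + 1) = γ.v i + e) ↔
      (γ.v j = γ.v i ∧ γ.v (i + 1) - γ.v i = e) :=
    and_congr_right fun h => by rw [γ.v_succ_eq_v_succ_iff.2 h, sub_eq_iff_eq_add']
  have hin (j : ℕ) : (γ.v j = γ.v i + e ∧ γ.v (j + 1) = γ.v i) ↔
      (γ.v j = γ.v (i + γ.n - 1) ∧ γ.v (i + γ.n) - γ.v (i + γ.n - 1) = -e) := by
    rw [γ.periodic, ← hprev, v_succ_eq_v_succ_iff]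
    constructor
    · rintro ⟨h₁, h₂⟩
      exact ⟨h₂, by rw [← h₂, h₁]; abel⟩
    · rintro ⟨h₁, h₂⟩
      exact ⟨by rw [h₁]; linear_combination -h₂, h₁⟩
  simp only [flow, edgeSign, Finset.sum_sub_distrib, hout, hin, sum_range_ite_v_eq_and]

lemma angleAt_eq_cross (i : ℕ) :
    angleAt γ i = (((γ.v (i + γ.n) - γ.v (i + γ.n - 1)).1 * (γ.v (i + 1) - γ.v i).2 -
      (γ.v (i + γ.n) - γ.v (i + γ.n - 1)).2 * (γ.v (i + 1) - γ.v i).1 : ℤ) : ℚ) / 4 := by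
  have hin := γ.isUnitStep_v_sub_v_pred i
  have hout := γ.step i
  simp only [angleAt]
  generalize γ.v (i + γ.n) - γ.v (i + γ.n - 1) = din at hin ⊢
  generalize γ.v (i + 1) - γ.v i = dout at hout ⊢
  rcases hin with rfl | rfl | rfl | rfl <;> rcases hout with rfl | rfl | rfl | rfl <;> norm_num

end LatticeCycle

noncomputable def meanGap (a b c d : ℤ) : ℚ :=
  (∑ k ∈ ({a, b, c, d} : Finset ℤ), (k : ℚ)) / ({a, b, c, d} : Finset ℤ).card -
    ((a + b + c + d : ℤ) : ℚ) / 4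

lemma topw_sub_metricw_eq_meanGap (γ : LatticeCycle) (v : ℤ × ℤ) :
    topw γ v - metricw γ v =
      meanGap (wind γ (corner v (-1) (-1))) (wind γ (corner v (-1) 1))
        (wind γ (corner v 1 (-1))) (wind γ (corner v 1 1)) := rfl

lemma meanGap_self (a : ℤ) : meanGap a a a a = 0 := by
  simp only [meanGap, Finset.mem_singleton, Finset.insert_eq_of_mem, Finset.sum_singleton,
    Finset.card_singleton]
  push_cast
  ring

/-- The set of values is `{min, max}`, whose mean is the midpoint. -/
lemma meanGap_eq_of_max_le_min_add_one {a b c d : ℤ}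
    (h : max (max a b) (max c d) ≤ min (min a b) (min c d) + 1) :
    meanGap a b c d =
      ((2 * max (max a b) (max c d) + 2 * min (min a b) (min c d) - (a + b + c + d) : ℤ) : ℚ)
        / 4 := by
  set M := max (max a b) (max c d) with hM
  set m := min (min a b) (min c d) with hm
  have hs : ({a, b, c, d} : Finset ℤ) = {m, M} := by
    ext x
    simp only [Finset.mem_insert, Finset.mem_singleton]
    omega
  rw [meanGap, hs]
  rcases eq_or_ne m M with hmM | hmM
  · rw [hmM, Finset.pair_eq_singleton, Finset.sum_singleton, Finset.card_singleton]
    push_cast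
    ring
  · rw [Finset.sum_pair hmM, Finset.card_pair hmM]
    push_cast
    ring

lemma meanGap_eq_cross {a b c d : ℤ} {din dout : ℤ × ℤ} (hin : IsUnitStep din)
    (hout : IsUnitStep dout)
    (hN : b - d = (if dout = (0, 1) then 1 else 0) - (if din = -(0, 1) then 1 else 0))
    (hS : a - c = -((if dout = (0, -1) then 1 else 0) - (if din = -(0, -1) then 1 else 0)))
    (hW : a - b = (if dout = (-1, 0) then 1 else 0) - (if din = -(-1, 0) then 1 else 0))
    (hE : c - d = -((if dout = (1, 0) then 1 else 0) - (if din = -(1, 0) then 1 else 0))) :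
    meanGap a b c d = ((din.1 * dout.2 - din.2 * dout.1 : ℤ) : ℚ) / 4 := by
  suffices h : max (max a b) (max c d) ≤ min (min a b) (min c d) + 1 ∧
      2 * max (max a b) (max c d) + 2 * min (min a b) (min c d) - (a + b + c + d) =
        din.1 * dout.2 - din.2 * dout.1 by
    rw [meanGap_eq_of_max_le_min_add_one h.1, h.2]
  rcases hin with rfl | rfl | rfl | rfl <;> rcases hout with rfl | rfl | rfl | rfl <;>
    norm_num at hN hS hW hE ⊢ <;> omega

/-- Lemma 3.3: `topw(γ,v) - metricw(γ,v) = angle(γ,v)` when `v` is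
a vertex of `γ`, and `topw(γ,v) - metricw(γ,v) = 0` otherwise. -/
theorem topw_sub_metricw (γ : LatticeCycle) (v : ℤ × ℤ) :
    (γ.isVertex v → topw γ v - metricw γ v = angle γ v) ∧
    (¬ γ.isVertex v → topw γ v - metricw γ v = 0) := by
  obtain ⟨hN, hS, hW, hE⟩ := γ.wind_corner_sub_wind_corner v
  rw [topw_sub_metricw_eq_meanGap]
  refine ⟨fun hv => ?_, fun hv => ?_⟩
  · rw [angle, dif_pos hv, γ.angleAt_eq_cross]
    obtain ⟨-, hvi⟩ := hv.choose_spec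
    generalize hv.choose = i at hvi ⊢
    subst hvi
    simp only [γ.flow_v_add] at hN hS hW hE
    exact meanGap_eq_cross (γ.isUnitStep_v_sub_v_pred i) (γ.step i) hN hS hW hE
  · simp only [γ.flow_eq_zero_of_not_isVertex hv, neg_zero, sub_eq_zero] at hN hS hW hE
    rw [← hE, ← hS, ← hW, meanGap_self]
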